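/- arXiv:2303.08277 — 5 statements merged into one kernel-verified Lean document; each statement's English description precedes it below -/
import Mathlib

section
/- For every integer k ≥ 1 and real y > 1, the sum of 1/n over integers n with exactly k prime factors (counted with multiplicity) all of which are less than e^y is at most (k+1) y^2 C / 2^k for an absolute constant C. More precisely, ∑_{Ω(n)=k, P(n)<e^y} 2^k/n ≤ (k+1) ∏_{2<p<e^y} (1 − 2/p)^{-1}. -/
open scoped BigOperators Classical

/-- auxiliary weight on primes: `2/p` for odd primes, `0` at `2`. -/
noncomputable def stmt5w (p : ℕ) : ℝ := if p = 2 then 0 else 2 / p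

/-- completely multiplicative function `n ↦ ∏_{p | n} stmt5w p` (with multiplicity). -/
noncomputable def stmt5f : ℕ →* ℝ where
  toFun n := if n = 0 then 0 else (n.primeFactorsList.map stmt5w).prod
  map_one' := by simp
  map_mul' m n := by
    rcases eq_or_ne m 0 with rfl | hm
    · simp
    rcases eq_or_ne n 0 with rfl | hn
    · simp
    have hmn : m * n ≠ 0 := mul_ne_zero hm hn
    simp only [hm, hn, hmn, if_false]
    rw [((Nat.perm_primeFactorsList_mul hm hn).map stmt5w).prod_eq, List.map_append,
      List.prod_append]

lemma stmt5_list_prod (l : List ℕ) :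
    (l.map fun p : ℕ => (2 : ℝ) / (p : ℝ)).prod = 2 ^ l.length / ((l.prod : ℕ) : ℝ) := by
  induction l with
  | nil => simp
  | cons a l ih =>
      simp only [List.map_cons, List.prod_cons, List.length_cons, ih, Nat.cast_mul]
      rw [div_mul_div_comm, pow_succ]
      ring_nf

lemma stmt5f_eq {m : ℕ} (hm : m ≠ 0) (hodd : ∀ p ∈ m.primeFactorsList, p ≠ 2) :
    stmt5f m = 2 ^ m.primeFactorsList.length / m := by
  have h : (m.primeFactorsList.map stmt5w)
      = m.primeFactorsList.map fun p : ℕ => (2 : ℝ) / (p : ℝ) := by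
    apply List.map_congr_left
    intro p hp
    simp [stmt5w, hodd p hp]
  simp only [stmt5f, MonoidHom.coe_mk, OneHom.coe_mk, hm, if_false, h, stmt5_list_prod,
    Nat.prod_primeFactorsList hm]

theorem stmt5 (k : ℕ) (hk : 1 ≤ k) (y : ℝ) (hy : 1 < y) :
    (∑' n : ℕ, if 1 ≤ n ∧ n.primeFactorsList.length = k ∧
        (∀ p : ℕ, p.Prime → p ∣ n → (p : ℝ) < Real.exp y)
      then (2:ℝ) ^ k / n else 0)
      ≤ (k + 1) *
        ∏ p ∈ (Finset.range ⌈Real.exp y⌉₊).filter (fun p => p.Prime ∧ 2 < p),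
          (1 - 2 / (p : ℝ))⁻¹ := by
  classical
  set S : Finset ℕ := (Finset.range ⌈Real.exp y⌉₊).filter (fun p => p.Prime ∧ 2 < p) with hS
  -- the weight function has small values at primes
  have hfp : ∀ {p : ℕ}, p.Prime → stmt5f p = stmt5w p := by
    intro p hp
    simp [stmt5f, hp.ne_zero, Nat.primeFactorsList_prime hp]
  have hw : ∀ {p : ℕ}, p.Prime → ‖stmt5f p‖ < 1 := by
    intro p hp
    rw [hfp hp]
    rcases eq_or_ne p 2 with rfl | h2
    · simp [stmt5w]
    · have hp3 : 3 ≤ p := by have := hp.two_le; omega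
      have hp3' : (3 : ℝ) ≤ p := by exact_mod_cast hp3
      rw [stmt5w, if_neg h2, Real.norm_eq_abs, abs_of_nonneg (by positivity)]
      rw [div_lt_one (by linarith)]
      linarith
  -- Euler product over factored numbers of S
  obtain ⟨hsum, hprod⟩ :=
    EulerProduct.summable_and_hasSum_factoredNumbers_prod_filter_prime_geometric hw S
  have hSprime : ∀ p ∈ S, p.Prime := fun p hp => (Finset.mem_filter.mp hp).2.1
  have hfilter : S.filter (fun p => p.Prime) = S :=
    Finset.filter_true_of_mem fun p hp => hSprime p hp
  have hprodval : ∏ p ∈ S with p.Prime, (1 - stmt5f p)⁻¹ =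
      ∏ p ∈ S, (1 - 2 / (p : ℝ))⁻¹ := by
    rw [hfilter]
    refine Finset.prod_congr rfl fun p hp => ?_
    have hp2 : 2 < p := (Finset.mem_filter.mp hp).2.2
    rw [hfp (hSprime p hp), stmt5w, if_neg (by omega)]
  -- indicator version
  set G : ℕ → ℝ := Set.indicator (Nat.factoredNumbers S) stmt5f with hG
  have hGsum : HasSum G (∏ p ∈ S, (1 - 2 / (p : ℝ))⁻¹) := by
    rw [← hprodval, ← hasSum_subtype_iff_indicator]
    exact hprod
  have hGnonneg : ∀ m, 0 ≤ G m := by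
    intro m
    rw [hG]
    rcases Classical.em (m ∈ Nat.factoredNumbers S) with h | h
    · rw [Set.indicator_of_mem h]
      rcases eq_or_ne m 0 with rfl | hm
      · simp [stmt5f]
      · have : stmt5f m = (m.primeFactorsList.map stmt5w).prod := by
          simp [stmt5f, hm]
        rw [this]
        apply List.prod_nonneg
        intro x hx
        simp only [List.mem_map] at hx
        obtain ⟨p, _, rfl⟩ := hx
        rw [stmt5w]
        split <;> positivity
    · rw [Set.indicator_of_notMem h]
  -- the summand
  set F : ℕ → ℝ := fun n => if 1 ≤ n ∧ n.primeFactorsList.length = k ∧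
      (∀ p : ℕ, p.Prime → p ∣ n → (p : ℝ) < Real.exp y) then (2:ℝ) ^ k / n else 0 with hF
  have hFnonneg : ∀ n, 0 ≤ F n := by
    intro n; rw [hF]; dsimp only; split <;> positivity
  have hRHSnonneg : (0:ℝ) ≤ (k + 1) * ∏ p ∈ S, (1 - 2 / (p : ℝ))⁻¹ := by
    apply mul_nonneg (by positivity)
    apply Finset.prod_nonneg
    intro p hp
    have hp2 : 2 < p := (Finset.mem_filter.mp hp).2.2
    have hp2' : (2:ℝ) < p := by exact_mod_cast hp2
    have : 2 / (p:ℝ) < 1 := by rw [div_lt_one (by linarith)]; linarith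
    have : (0:ℝ) < 1 - 2/p := by linarith
    positivity
  by_cases hFsum : Summable F
  swap
  · rw [tsum_eq_zero_of_not_summable hFsum]
    exact hRHSnonneg
  -- split according to the 2-adic valuation
  set Fa : ℕ → ℕ → ℝ := fun a n => if n.factorization 2 = a then F n else 0 with hFa
  have hFaF : ∀ a n, Fa a n ≤ F n := by
    intro a n; rw [hFa]; dsimp only; split
    · exact le_refl _
    · exact hFnonneg n
  have hFanonneg : ∀ a n, 0 ≤ Fa a n := by
    intro a n; rw [hFa]; dsimp only; split
    · exact hFnonneg n
    · exact le_refl _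
  have hFasum : ∀ a, Summable (Fa a) :=
    fun a => Summable.of_nonneg_of_le (hFanonneg a) (hFaF a) hFsum
  -- F n = ∑ a ∈ range (k+1), Fa a n
  have hsplit : ∀ n, F n = ∑ a ∈ Finset.range (k+1), Fa a n := by
    intro n
    rw [hFa]
    dsimp only
    rcases eq_or_ne (F n) 0 with h0 | h0
    · simp [h0]
    · simp only [Finset.sum_ite_eq]
      rw [if_pos]
      have hcond : 1 ≤ n ∧ n.primeFactorsList.length = k ∧
          (∀ p : ℕ, p.Prime → p ∣ n → (p : ℝ) < Real.exp y) := by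
        by_contra hc
        exact h0 (by rw [hF]; exact if_neg hc)
      rw [Finset.mem_range]
      have : n.factorization 2 ≤ n.primeFactorsList.length := by
        rw [← Nat.primeFactorsList_count_eq]
        exact List.count_le_length
      omega
  -- key bound for each a
  have hkey : ∀ a ∈ Finset.range (k+1), ∑' n, Fa a n ≤ ∏ p ∈ S, (1 - 2 / (p : ℝ))⁻¹ := by
    intro a ha
    rw [Finset.mem_range] at ha
    set i : ℕ → ℕ := fun m => 2 ^ a * m with hi
    have hinj : Function.Injective i := fun m₁ m₂ h =>
      Nat.eq_of_mul_eq_mul_left (Nat.pow_pos (n := a) (by norm_num : 0 < 2)) h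
    have hrange : Function.support (Fa a) ⊆ Set.range i := by
      intro n hn
      rw [Function.mem_support] at hn
      have hv : n.factorization 2 = a := by
        by_contra hc
        exact hn (by rw [hFa]; exact if_neg hc)
      have hdvd : 2 ^ a ∣ n := by
        rw [← hv]
        exact Nat.ordProj_dvd n 2
      exact ⟨n / 2 ^ a, (Nat.mul_div_cancel' hdvd)⟩
    rw [← hinj.tsum_eq hrange]
    -- now compare pointwise with G
    have hle : ∀ m, Fa a (i m) ≤ G m := by
      intro m
      rcases eq_or_ne (Fa a (i m)) 0 with h0 | h0
      · rw [h0]; exact hGnonneg m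
      have hv : (i m).factorization 2 = a := by
        by_contra hc
        exact h0 (by rw [hFa]; exact if_neg hc)
      have hcond : 1 ≤ i m ∧ (i m).primeFactorsList.length = k ∧
          (∀ p : ℕ, p.Prime → p ∣ i m → (p : ℝ) < Real.exp y) := by
        by_contra hc
        exact h0 (by rw [hFa, hF]; dsimp only; rw [if_pos hv]; exact if_neg hc)
      obtain ⟨hn1, hnlen, hnsm⟩ := hcond
      have hm0 : m ≠ 0 := by
        intro h; rw [hi] at hn1; simp [h] at hn1
      have h2a : (2:ℕ) ^ a ≠ 0 := by positivity
      -- m is odd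
      have hmodd : ¬ (2 ∣ m) := by
        intro hdvd
        have : (2:ℕ) ^ (a+1) ∣ i m := by
          rw [pow_succ]
          exact mul_dvd_mul_left (2^a) hdvd
        have := (Nat.Prime.pow_dvd_iff_le_factorization Nat.prime_two
          (by rw [hi]; exact mul_ne_zero h2a hm0)).mp this
        omega
      have hmodd' : ∀ p ∈ m.primeFactorsList, p ≠ 2 := by
        intro p hp hp2
        exact hmodd (hp2 ▸ Nat.dvd_of_mem_primeFactorsList hp)
      -- m is S-factored
      have hmS : m ∈ Nat.factoredNumbers S := by
        refine ⟨hm0, fun p hp => ?_⟩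
        have hpp : p.Prime := Nat.prime_of_mem_primeFactorsList hp
        have hpdvd : p ∣ i m := dvd_mul_of_dvd_right (Nat.dvd_of_mem_primeFactorsList hp) _
        have hplt : (p : ℝ) < Real.exp y := hnsm p hpp hpdvd
        have hpltN : p < ⌈Real.exp y⌉₊ := by
          by_contra hc
          push_neg at hc
          have : (⌈Real.exp y⌉₊ : ℝ) ≤ p := by exact_mod_cast hc
          have := Nat.le_ceil (Real.exp y)
          linarith
        exact Finset.mem_filter.mpr ⟨Finset.mem_range.mpr hpltN, hpp,
          lt_of_le_of_ne hpp.two_le (Ne.symm (hmodd' p hp))⟩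
      -- length of m's factor list
      have hlen : a + m.primeFactorsList.length = k := by
        have : (i m).primeFactorsList.length =
            a + m.primeFactorsList.length := by
          rw [hi]
          rw [(Nat.perm_primeFactorsList_mul h2a hm0).length_eq, List.length_append,
            Nat.Prime.primeFactorsList_pow Nat.prime_two, List.length_replicate]
        omega
      -- compute both sides
      have hGm : G m = 2 ^ m.primeFactorsList.length / m := by
        rw [hG, Set.indicator_of_mem hmS, stmt5f_eq hm0 hmodd']
      have hFam : Fa a (i m) = (2:ℝ) ^ k / (i m) := by
        rw [hFa, hF]; dsimp only
        rw [if_pos hv, if_pos ⟨hn1, hnlen, hnsm⟩]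
      rw [hFam, hGm, hi]
      have : ((2 ^ a * m : ℕ) : ℝ) = 2 ^ a * (m:ℝ) := by push_cast; ring
      rw [this, ← hlen, pow_add]
      rw [div_le_div_iff₀ (by positivity) (by positivity : (0:ℝ) < (m:ℝ))]
      · ring_nf
        exact le_refl _
    calc ∑' m, Fa a (i m) ≤ ∑' m, G m :=
          Summable.tsum_le_tsum hle ((hFasum a).comp_injective hinj) hGsum.summable
      _ = ∏ p ∈ S, (1 - 2 / (p : ℝ))⁻¹ := hGsum.tsum_eq
  -- put everything together
  have htsum : ∑' n, F n = ∑ a ∈ Finset.range (k+1), ∑' n, Fa a n := by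
    rw [← Summable.tsum_finsetSum (fun a _ => hFasum a)]
    exact tsum_congr hsplit
  calc ∑' n, F n = ∑ a ∈ Finset.range (k+1), ∑' n, Fa a n := htsum
    _ ≤ ∑ a ∈ Finset.range (k+1), ∏ p ∈ S, (1 - 2 / (p : ℝ))⁻¹ :=
        Finset.sum_le_sum hkey
    _ = (k + 1) * ∏ p ∈ S, (1 - 2 / (p : ℝ))⁻¹ := by
        rw [Finset.sum_const, Finset.card_range, nsmul_eq_mul]
        push_cast
        ring
end

section
/- For every real y > 1, the identity ∏_{p<y} (1 − 1/p) = ∑_{q≥y, q prime} (1/q) ∏_{p<q} (1 − 1/p) holds, where products and sums are over primes. -/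
open scoped BigOperators Classical

private noncomputable def Pfun : ℕ → ℝ :=
  fun n => ∏ p ∈ (Finset.range n).filter Nat.Prime, (1 - 1 / (p : ℝ))

private lemma factor_nonneg {p : ℕ} (hp : p.Prime) : (0:ℝ) ≤ 1 - 1 / (p : ℝ) := by
  have h2 : (2:ℝ) ≤ (p:ℝ) := by exact_mod_cast hp.two_le
  have : 1 / (p:ℝ) ≤ 1 / 2 := by
    apply one_div_le_one_div_of_le <;> linarith
  linarith

private lemma Pfun_nonneg (n : ℕ) : 0 ≤ Pfun n := by
  apply Finset.prod_nonneg
  intro p hp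
  exact factor_nonneg (Finset.mem_filter.mp hp).2

private lemma Pfun_succ (n : ℕ) :
    Pfun (n + 1) = if n.Prime then Pfun n * (1 - 1 / (n : ℝ)) else Pfun n := by
  unfold Pfun
  rw [Finset.range_add_one, Finset.filter_insert]
  split_ifs with h
  · rw [Finset.prod_insert (by simp), mul_comm]
  · rfl

private lemma Pfun_tendsto_zero :
    Filter.Tendsto Pfun Filter.atTop (nhds 0) := by
  set f : ℕ → ℝ := Set.indicator {p | p.Prime} (fun n : ℕ => (1 : ℝ) / n) with hf
  have hfnn : ∀ n, 0 ≤ f n := by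
    intro n
    exact Set.indicator_nonneg (fun p _ => by positivity) n
  have hdiv : Filter.Tendsto (fun n => ∑ i ∈ Finset.range n, f i) Filter.atTop Filter.atTop :=
    (not_summable_iff_tendsto_nat_atTop_of_nonneg hfnn).mp not_summable_one_div_on_primes
  have hexp : Filter.Tendsto (fun n => Real.exp (-(∑ i ∈ Finset.range n, f i)))
      Filter.atTop (nhds 0) :=
    Real.tendsto_exp_atBot.comp (Filter.tendsto_neg_atTop_atBot.comp hdiv)
  refine tendsto_of_tendsto_of_tendsto_of_le_of_le tendsto_const_nhds hexp
    Pfun_nonneg (fun n => ?_)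
  -- Pfun n ≤ exp (-(∑ i ∈ range n, f i))
  have h1 : Pfun n ≤ ∏ p ∈ (Finset.range n).filter Nat.Prime, Real.exp (-(1 / (p:ℝ))) := by
    apply Finset.prod_le_prod
    · intro p hp; exact factor_nonneg (Finset.mem_filter.mp hp).2
    · intro p _
      have := Real.add_one_le_exp (-(1 / (p:ℝ)))
      linarith
  rw [← Real.exp_sum] at h1
  refine h1.trans_eq ?_
  congr 1
  rw [Finset.sum_filter, ← Finset.sum_neg_distrib]
  apply Finset.sum_congr rfl
  intro i _
  simp only [hf, Set.indicator_apply, Set.mem_setOf_eq]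
  split_ifs <;> simp

theorem stmt6 (y : ℝ) (hy : 1 < y) :
    ∏ p ∈ (Finset.range ⌈y⌉₊).filter Nat.Prime, (1 - 1 / (p : ℝ)) =
      ∑' q : Nat.Primes, if y ≤ ((q : ℕ) : ℝ) then
        (1 / ((q : ℕ) : ℝ)) * ∏ p ∈ (Finset.range (q : ℕ)).filter Nat.Prime, (1 - 1 / (p : ℝ))
      else 0 := by
  set N := ⌈y⌉₊ with hN
  -- the summand as a function of ℕ
  set g : ℕ → ℝ := fun n => if n.Prime ∧ N ≤ n then (1 / (n : ℝ)) * Pfun n else 0 with hg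
  have hyle : ∀ n : ℕ, (y ≤ (n : ℝ)) ↔ N ≤ n := fun n => (Nat.ceil_le).symm
  have hgnn : ∀ n, 0 ≤ g n := by
    intro n
    simp only [hg]
    split_ifs with h
    · exact mul_nonneg (by positivity) (Pfun_nonneg n)
    · exact le_refl 0
  -- telescoping: g n = Q n - Q (n+1) where Q n = Pfun (max n N)
  set Q : ℕ → ℝ := fun n => Pfun (max n N) with hQ
  have key : ∀ n, g n = Q n - Q (n + 1) := by
    intro n
    by_cases hn : N ≤ n
    · have h1 : max n N = n := max_eq_left hn
      have h2 : max (n + 1) N = n + 1 := max_eq_left (le_trans hn (Nat.le_succ n))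
      by_cases hp : n.Prime
      · have hn0 : (n : ℝ) ≠ 0 := by
          have := hp.two_le; positivity
        simp only [hQ, hg, h1, h2, Pfun_succ n, if_pos hp, if_pos (And.intro hp hn)]
        field_simp
        ring
      · simp only [hQ, hg, h1, h2, Pfun_succ n, if_neg hp]
        simp [hp]
    · have h1 : max n N = N := max_eq_right (le_of_not_ge hn)
      have h2 : max (n + 1) N = N := max_eq_right (Nat.succ_le_of_lt (lt_of_not_ge hn))
      simp only [hQ, hg, h1, h2, sub_self]
      simp [hn]
  have hsum : HasSum g (Pfun N) := by
    rw [hasSum_iff_tendsto_nat_of_nonneg hgnn]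
    have heq : ∀ k, ∑ n ∈ Finset.range k, g n = Q 0 - Q k := by
      intro k
      simp only [key]
      exact Finset.sum_range_sub' Q k
    simp only [heq]
    have hQ0 : Q 0 = Pfun N := by simp [hQ]
    rw [hQ0]
    have hQt : Filter.Tendsto Q Filter.atTop (nhds 0) := by
      apply Pfun_tendsto_zero.comp
      exact Filter.tendsto_atTop_mono (fun n => le_max_left n N) Filter.tendsto_id
    simpa using tendsto_const_nhds.sub hQt
  have hsupp : Function.support g ⊆ {p : ℕ | p.Prime} := by
    intro n hn
    by_contra h
    apply hn
    simp only [hg]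
    rw [if_neg]
    tauto
  have hsum2 : HasSum (fun q : Nat.Primes => g q) (Pfun N) :=
    (hasSum_subtype_iff_of_support_subset hsupp).mpr hsum
  have hfun : ∀ q : Nat.Primes,
      (if y ≤ ((q : ℕ) : ℝ) then
        (1 / ((q : ℕ) : ℝ)) * ∏ p ∈ (Finset.range (q : ℕ)).filter Nat.Prime, (1 - 1 / (p : ℝ))
      else 0) = g (q : ℕ) := by
    intro q
    simp only [hg, Pfun, q.2, true_and]
    exact if_congr (hyle _) rfl rfl
  calc ∏ p ∈ (Finset.range N).filter Nat.Prime, (1 - 1 / (p : ℝ))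
      = Pfun N := rfl
    _ = ∑' q : Nat.Primes, g (q : ℕ) := hsum2.tsum_eq.symm
    _ = _ := (tsum_congr hfun).symm
end

section
/- Let U_1, U_2, … be i.i.d. Uniform[0,1], let S_∞ = 1 + ∑_{j≥1} ∏_{k≤j} U_k, and let U be Uniform[0,1] independent of S_∞. Then S_∞ has the same distribution as 1 + U·S_∞. -/
open MeasureTheory ProbabilityTheory
open scoped BigOperators ENNReal

namespace Stmt8Aux

lemma ofReal_max_zero (x : ℝ) : ENNReal.ofReal (max 0 x) = ENNReal.ofReal x := by
  rcases le_total x 0 with h | h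
  · rw [max_eq_left h, ENNReal.ofReal_zero, ENNReal.ofReal_of_nonpos h]
  · rw [max_eq_right h]

lemma tsum_nonneg_eq_toReal {f : ℕ → ℝ} (h : ∀ n, 0 ≤ f n) :
    ∑' n, f n = (∑' n, ENNReal.ofReal (f n)).toReal := by
  by_cases hs : Summable f
  · rw [← ENNReal.ofReal_tsum_of_nonneg h hs, ENNReal.toReal_ofReal (tsum_nonneg h)]
  · rw [tsum_eq_zero_of_not_summable hs]
    have htop : ∑' n, ENNReal.ofReal (f n) = ∞ := by
      by_contra h'
      exact hs ((ENNReal.summable_toReal h').congr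
        (fun n => ENNReal.toReal_ofReal (h n)))
    rw [htop, ENNReal.toReal_top]

/-- The measurable version of `x ↦ 1 + ∑' j, ∏ k ≤ j, x k` (agrees with it when all
coordinates are in `[0,1]`). -/
noncomputable def MFun (x : ℕ → ℝ) : ℝ :=
  1 + (∑' j : ℕ, ∏ k ∈ Finset.range (j + 1), ENNReal.ofReal (max 0 (x k))).toReal

lemma measurable_MFun : Measurable MFun := by
  apply measurable_const.add
  apply Measurable.ennreal_toReal
  apply Measurable.ennreal_tsum
  intro j
  exact Finset.measurable_prod _ fun k _ =>
    (measurable_const.max (measurable_pi_apply k)).ennreal_ofReal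

lemma MFun_eq (x : ℕ → ℝ) :
    MFun x = 1 + (∑' j : ℕ, ∏ k ∈ Finset.range (j + 1), ENNReal.ofReal (x k)).toReal := by
  unfold MFun
  simp_rw [ofReal_max_zero]

lemma isProb_unif : IsProbabilityMeasure (volume.restrict (Set.Icc (0:ℝ) 1)) := by
  constructor
  rw [Measure.restrict_apply_univ]
  simp [Real.volume_Icc]

lemma tupleLaw {Ω : Type*} [MeasurableSpace Ω] (P : Measure Ω) [IsProbabilityMeasure P]
    (U : ℕ → Ω → ℝ) (hmeas : ∀ i, Measurable (U i))
    (hindep : iIndepFun U P)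
    (hunif : ∀ i, P.map (U i) = volume.restrict (Set.Icc (0:ℝ) 1))
    (s : Finset ℕ) :
    P.map (fun ω (i : s) => U i ω)
      = Measure.pi (fun _ : s => volume.restrict (Set.Icc (0:ℝ) 1)) := by
  classical
  haveI := isProb_unif
  refine (Measure.pi_eq (μ := fun _ : s => volume.restrict (Set.Icc (0:ℝ) 1))
    fun t ht => ?_).symm
  set t' : ℕ → Set ℝ := fun n => if h : n ∈ s then t ⟨n, h⟩ else Set.univ with ht'def
  have ht'meas : ∀ i ∈ s, MeasurableSet (t' i) := by
    intro i hi
    simp only [ht'def, dif_pos hi]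
    exact ht ⟨i, hi⟩
  have htuple : Measurable (fun ω (i : s) => U i ω) :=
    measurable_pi_lambda _ fun i => hmeas i
  rw [Measure.map_apply htuple (MeasurableSet.univ_pi ht)]
  have hpre : (fun ω (i : s) => U i ω) ⁻¹' Set.pi Set.univ t = ⋂ i ∈ s, U i ⁻¹' t' i := by
    ext ω
    simp only [Set.mem_preimage, Set.mem_pi, Set.mem_univ, forall_true_left, Set.mem_iInter]
    constructor
    · intro h i hi
      simp only [ht'def, dif_pos hi, Set.mem_preimage]
      exact h ⟨i, hi⟩
    · intro h i
      have := h i i.2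
      simpa only [ht'def, dif_pos i.2, Set.mem_preimage, Subtype.coe_eta] using this
  rw [hpre, hindep.measure_inter_preimage_eq_mul s ht'meas]
  have hval : ∀ i ∈ s, P (U i ⁻¹' t' i) = (volume.restrict (Set.Icc (0:ℝ) 1)) (t' i) := by
    intro i hi
    rw [← hunif i, Measure.map_apply (hmeas i) (ht'meas i hi)]
  rw [Finset.prod_congr rfl hval,
    ← Finset.prod_attach s (fun i => (volume.restrict (Set.Icc (0:ℝ) 1)) (t' i)),
    Finset.univ_eq_attach]
  refine Finset.prod_congr rfl fun i _ => ?_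
  simp only [ht'def, dif_pos i.2, Subtype.coe_eta]

lemma iIndepFun_succ {Ω : Type*} [MeasurableSpace Ω] {P : Measure Ω}
    {U : ℕ → Ω → ℝ} (hindep : iIndepFun U P) :
    iIndepFun (fun i => U (i + 1)) P := by
  classical
  rw [iIndepFun_iff_measure_inter_preimage_eq_mul]
  intro S sets hsets
  have hinj : ∀ x ∈ S, ∀ y ∈ S, x + 1 = y + 1 → x = y := fun x _ y _ h => by omega
  have h := hindep.measure_inter_preimage_eq_mul (S.image (· + 1))
      (sets := fun n => sets (n - 1)) (fun i hi => by
        obtain ⟨j, hj, rfl⟩ := Finset.mem_image.mp hi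
        simpa using hsets j hj)
  have hset : (⋂ i ∈ S.image (· + 1), U i ⁻¹' sets (i - 1))
      = ⋂ j ∈ S, U (j + 1) ⁻¹' sets j := by
    ext ω
    simp only [Set.mem_iInter, Finset.mem_image, Set.mem_preimage, forall_exists_index, and_imp]
    constructor
    · intro h j hj
      have := h (j + 1) j hj rfl
      simpa using this
    · rintro h i j hj rfl
      simpa using h j hj
  rw [hset, Finset.prod_image hinj] at h
  simpa using h

lemma lintegral_prod_range {Ω : Type*} [MeasurableSpace Ω] (P : Measure Ω)
    [IsProbabilityMeasure P] (W : ℕ → Ω → ℝ≥0∞) (hmeas : ∀ i, Measurable (W i))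
    (hindep : iIndepFun W P) (n : ℕ) :
    ∫⁻ ω, ∏ k ∈ Finset.range n, W k ω ∂P = ∏ k ∈ Finset.range n, ∫⁻ ω, W k ω ∂P := by
  induction n with
  | zero => simp
  | succ n ih =>
    have hprodmeas : Measurable (∏ k ∈ Finset.range n, W k) := by
      rw [show (∏ k ∈ Finset.range n, W k) = fun ω => ∏ k ∈ Finset.range n, W k ω from
        funext fun ω => Finset.prod_apply ω _ _]
      exact Finset.measurable_prod _ fun k _ => hmeas k
    have hind : IndepFun (∏ k ∈ Finset.range n, W k) (W n) P :=
      hindep.indepFun_finsetProd_of_notMem hmeas Finset.notMem_range_self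
    calc ∫⁻ ω, ∏ k ∈ Finset.range (n + 1), W k ω ∂P
        = ∫⁻ ω, (∏ k ∈ Finset.range n, W k) ω * W n ω ∂P := by
          simp only [Finset.prod_apply, Finset.prod_range_succ]
      _ = (∫⁻ ω, (∏ k ∈ Finset.range n, W k) ω ∂P) * ∫⁻ ω, W n ω ∂P :=
          lintegral_mul_eq_lintegral_mul_lintegral_of_indepFun hprodmeas (hmeas n) hind
      _ = ∏ k ∈ Finset.range (n + 1), ∫⁻ ω, W k ω ∂P := by
          simp only [Finset.prod_apply, Finset.prod_range_succ]
          rw [← ih]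

lemma lintegral_ofReal_unif {Ω : Type*} [MeasurableSpace Ω] (P : Measure Ω)
    [IsProbabilityMeasure P] {X : Ω → ℝ} (hX : Measurable X)
    (hunif : P.map X = volume.restrict (Set.Icc (0:ℝ) 1)) :
    ∫⁻ ω, ENNReal.ofReal (X ω) ∂P = ENNReal.ofReal (1 / 2) := by
  rw [← lintegral_map ENNReal.measurable_ofReal hX, hunif,
    ← ofReal_integral_eq_lintegral_ofReal]
  · congr 1
    rw [MeasureTheory.integral_Icc_eq_integral_Ioc,
      ← intervalIntegral.integral_of_le (zero_le_one (α := ℝ)), integral_id]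
    norm_num
  · exact continuous_id.integrableOn_Icc
  · refine (ae_restrict_iff' measurableSet_Icc).2 (Filter.Eventually.of_forall ?_)
    intro x hx
    exact hx.1

end Stmt8Aux

open Stmt8Aux

theorem stmt8 {Ω : Type*} [MeasurableSpace Ω] (P : Measure Ω) [IsProbabilityMeasure P]
    (U : ℕ → Ω → ℝ) (V : Ω → ℝ)
    (hmeas : ∀ i, Measurable (U i)) (hmeasV : Measurable V)
    (hindep : iIndepFun U P)
    (hunif : ∀ i, P.map (U i) = volume.restrict (Set.Icc (0:ℝ) 1))
    (hunifV : P.map V = volume.restrict (Set.Icc (0:ℝ) 1))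
    (hVindep : IndepFun V
      (fun ω => 1 + ∑' j : ℕ, ∏ k ∈ Finset.range (j + 1), U k ω) P) :
    P.map (fun ω => 1 + ∑' j : ℕ, ∏ k ∈ Finset.range (j + 1), U k ω)
      = P.map (fun ω =>
          1 + V ω * (1 + ∑' j : ℕ, ∏ k ∈ Finset.range (j + 1), U k ω)) := by
  classical
  set S : Ω → ℝ := fun ω => 1 + ∑' j : ℕ, ∏ k ∈ Finset.range (j + 1), U k ω with hSdef
  set T : Ω → ℕ → ℝ := fun ω i => U i ω with hTdef
  set T' : Ω → ℕ → ℝ := fun ω i => U (i + 1) ω with hT'def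
  have hTmeas : Measurable T := measurable_pi_lambda _ fun i => hmeas i
  have hT'meas : Measurable T' := measurable_pi_lambda _ fun i => hmeas (i + 1)
  have hindep' : iIndepFun (fun i => U (i + 1)) P :=
    iIndepFun_succ hindep
  have hφ : Measurable (fun p : ℝ × ℝ => 1 + p.1 * p.2) :=
    measurable_const.add (measurable_fst.mul measurable_snd)
  -- a.e. each U k lies in [0,1]
  have hae_mem : ∀ᵐ ω ∂P, ∀ k, U k ω ∈ Set.Icc (0:ℝ) 1 := by
    rw [ae_all_iff]
    intro k
    have h0 : P (U k ⁻¹' (Set.Icc (0:ℝ) 1)ᶜ) = 0 := by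
      rw [← Measure.map_apply (hmeas k) measurableSet_Icc.compl, hunif k,
        Measure.restrict_apply measurableSet_Icc.compl]
      simp
    rw [ae_iff]
    exact h0
  -- a.e. finiteness of the shifted series (in ℝ≥0∞)
  have hmeasW : ∀ i : ℕ, Measurable fun ω => ENNReal.ofReal (U (i + 1) ω) :=
    fun i => (hmeas (i + 1)).ennreal_ofReal
  have hWfin : ∀ᵐ ω ∂P,
      (∑' j : ℕ, ∏ k ∈ Finset.range (j + 1), ENNReal.ofReal (U (k + 1) ω)) ≠ ∞ := by
    have hWindep : iIndepFun
        (fun i ω => ENNReal.ofReal (U (i + 1) ω)) P :=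
      hindep'.comp (fun _ => ENNReal.ofReal) (fun _ => ENNReal.measurable_ofReal)
    have hmeasSig : Measurable fun ω =>
        (∑' j : ℕ, ∏ k ∈ Finset.range (j + 1), ENNReal.ofReal (U (k + 1) ω)) :=
      Measurable.ennreal_tsum fun j => Finset.measurable_prod _ fun k _ => hmeasW k
    have hint : ∫⁻ ω, (∑' j : ℕ, ∏ k ∈ Finset.range (j + 1),
        ENNReal.ofReal (U (k + 1) ω)) ∂P ≠ ∞ := by
      rw [lintegral_tsum fun j =>
        (Finset.measurable_prod _ fun k _ => hmeasW k).aemeasurable]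
      have hterm : ∀ j : ℕ, ∫⁻ ω, ∏ k ∈ Finset.range (j + 1),
          ENNReal.ofReal (U (k + 1) ω) ∂P = ENNReal.ofReal (1 / 2) ^ (j + 1) := by
        intro j
        rw [lintegral_prod_range P _ hmeasW hWindep (j + 1),
          Finset.prod_congr rfl fun k _ =>
            lintegral_ofReal_unif P (hmeas (k + 1)) (hunif (k + 1))]
        simp [Finset.prod_const, Finset.card_range]
      rw [tsum_congr hterm, ENNReal.tsum_geometric_add_one]
      refine ENNReal.mul_ne_top ENNReal.ofReal_ne_top ?_
      rw [Ne, ENNReal.inv_eq_top, tsub_eq_zero_iff_le]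
      intro hle
      exact absurd (lt_of_le_of_lt hle (ENNReal.ofReal_lt_one.mpr (by norm_num)))
        (lt_irrefl _)
    exact (ae_lt_top hmeasSig hint).mono fun ω h => h.ne
  -- S agrees a.e. with the measurable function MFun ∘ T
  have hS_eq : S =ᵐ[P] fun ω => MFun (T ω) := by
    filter_upwards [hae_mem] with ω hω
    have hnn : ∀ j : ℕ, 0 ≤ ∏ k ∈ Finset.range (j + 1), U k ω :=
      fun j => Finset.prod_nonneg fun k _ => (hω k).1
    have h1 : ∀ j : ℕ, (∏ k ∈ Finset.range (j + 1), ENNReal.ofReal (T ω k))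
        = ENNReal.ofReal (∏ k ∈ Finset.range (j + 1), U k ω) :=
      fun j => (ENNReal.ofReal_prod_of_nonneg fun k _ => (hω k).1).symm
    rw [hSdef, MFun_eq, tsum_congr h1]
    simp only
    rw [tsum_nonneg_eq_toReal hnn]
  -- the recursion identity a.e.
  have hrec : (fun ω => MFun (T ω)) =ᵐ[P] fun ω => 1 + U 0 ω * MFun (T' ω) := by
    filter_upwards [hae_mem, hWfin] with ω hω hfin
    rw [MFun_eq, MFun_eq]
    set a : ℕ → ℝ≥0∞ := fun k => ENNReal.ofReal (U k ω) with hadef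
    have hstep : ∀ j : ℕ, ∏ k ∈ Finset.range (j + 1), a k
        = (∏ k ∈ Finset.range j, a (k + 1)) * a 0 :=
      fun j => Finset.prod_range_succ' a j
    have hSig : (∑' j : ℕ, ∏ k ∈ Finset.range (j + 1), a k)
        = a 0 * (1 + ∑' j : ℕ, ∏ k ∈ Finset.range (j + 1), a (k + 1)) := by
      calc ∑' j : ℕ, ∏ k ∈ Finset.range (j + 1), a k
          = ∑' j : ℕ, (∏ k ∈ Finset.range j, a (k + 1)) * a 0 := tsum_congr hstep
        _ = (∑' j : ℕ, ∏ k ∈ Finset.range j, a (k + 1)) * a 0 := ENNReal.tsum_mul_right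
        _ = a 0 * (1 + ∑' j : ℕ, ∏ k ∈ Finset.range (j + 1), a (k + 1)) := by
            rw [tsum_eq_zero_add' ENNReal.summable]
            simp [mul_comm]
    have hfin' : (∑' j : ℕ, ∏ k ∈ Finset.range (j + 1), a (k + 1)) ≠ ∞ := hfin
    rw [show (∑' j : ℕ, ∏ k ∈ Finset.range (j + 1), ENNReal.ofReal (T ω k))
        = ∑' j : ℕ, ∏ k ∈ Finset.range (j + 1), a k from rfl,
      show (∑' j : ℕ, ∏ k ∈ Finset.range (j + 1), ENNReal.ofReal (T' ω k))
        = ∑' j : ℕ, ∏ k ∈ Finset.range (j + 1), a (k + 1) from rfl,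
      hSig, ENNReal.toReal_mul, ENNReal.toReal_add ENNReal.one_ne_top hfin', ENNReal.toReal_one,
      hadef, ENNReal.toReal_ofReal (hω 0).1]
  -- independence of U 0 and MFun ∘ T'
  have hgmeas : Measurable fun ω => MFun (T' ω) := measurable_MFun.comp hT'meas
  have hIndep0 : IndepFun (U 0) (fun ω => MFun (T' ω)) P := by
    rw [IndepFun_iff_Indep]
    have h1 : iIndep (fun i => MeasurableSpace.comap (U i) inferInstance) P :=
      (iIndepFun_iff_iIndep _ _ _).mp hindep
    have h2 := indep_biSup_compl (fun n => (hmeas n).comap_le) h1 {0}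
    refine indep_of_indep_of_le_left (indep_of_indep_of_le_right h2 ?_) ?_
    · have hg' : @Measurable Ω ℝ
          (⨆ n ∈ ({0}ᶜ : Set ℕ), MeasurableSpace.comap (U n) inferInstance) _
          (fun ω => MFun (T' ω)) := by
        letI : MeasurableSpace Ω :=
          ⨆ n ∈ ({0}ᶜ : Set ℕ), MeasurableSpace.comap (U n) inferInstance
        refine measurable_MFun.comp (measurable_pi_lambda _ fun i => ?_)
        have hmem : (i + 1) ∈ ({0}ᶜ : Set ℕ) := by simp
        have hle : MeasurableSpace.comap (U (i + 1)) inferInstance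
            ≤ ⨆ n ∈ ({0}ᶜ : Set ℕ), MeasurableSpace.comap (U n) inferInstance :=
          le_biSup (fun n => MeasurableSpace.comap (U n) inferInstance) hmem
        exact measurable_iff_comap_le.mpr hle
      exact Measurable.comap_le hg'
    · exact le_biSup (fun n => MeasurableSpace.comap (U n) inferInstance)
        (Set.mem_singleton 0)
  have hSae : AEMeasurable S P :=
    (measurable_MFun.comp hTmeas).aemeasurable.congr hS_eq.symm
  -- the shift leaves the law of the whole sequence invariant
  have hTT' : P.map T = P.map T' := by
    haveI : IsProbabilityMeasure (P.map T) := Measure.isProbabilityMeasure_map hTmeas.aemeasurable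
    haveI : IsProbabilityMeasure (P.map T') := Measure.isProbabilityMeasure_map hT'meas.aemeasurable
    refine ext_of_generate_finite _ generateFrom_measurableCylinders.symm
      isPiSystem_measurableCylinders (fun t ht => ?_) ?_
    · obtain ⟨s, Sset, hSm, rfl⟩ := (mem_measurableCylinders t).mp ht
      rw [Measure.map_apply hTmeas hSm.cylinder, Measure.map_apply hT'meas hSm.cylinder]
      have e1 : T ⁻¹' cylinder s Sset = (fun ω (i : s) => U i ω) ⁻¹' Sset := rfl
      have e2 : T' ⁻¹' cylinder s Sset = (fun ω (i : s) => U (i + 1) ω) ⁻¹' Sset := rfl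
      rw [e1, e2,
        ← Measure.map_apply (measurable_pi_lambda _ fun i : s => hmeas i) hSm,
        ← Measure.map_apply (measurable_pi_lambda _ fun i : s => hmeas (i + 1)) hSm,
        tupleLaw P U hmeas hindep hunif s,
        tupleLaw P (fun i => U (i + 1)) (fun i => hmeas (i + 1)) hindep'
          (fun i => hunif (i + 1)) s]
    · simp
  have hgm' : P.map (fun ω => MFun (T' ω)) = P.map (fun ω => MFun (T ω)) := by
    have h1 : P.map (MFun ∘ T') = P.map (MFun ∘ T) := by
      rw [← Measure.map_map measurable_MFun hT'meas, ← Measure.map_map measurable_MFun hTmeas,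
        hTT']
    exact h1
  calc P.map S
      = P.map (fun ω => MFun (T ω)) := Measure.map_congr hS_eq
    _ = P.map (fun ω => 1 + U 0 ω * MFun (T' ω)) := Measure.map_congr hrec
    _ = ((P.map (U 0)).prod (P.map (fun ω => MFun (T' ω)))).map
          (fun p : ℝ × ℝ => 1 + p.1 * p.2) := by
        rw [← (indepFun_iff_map_prod_eq_prod_map_map (hmeas 0).aemeasurable
            hgmeas.aemeasurable).mp hIndep0,
          Measure.map_map hφ ((hmeas 0).prodMk hgmeas)]
        rfl
    _ = ((P.map V).prod (P.map S)).map (fun p : ℝ × ℝ => 1 + p.1 * p.2) := by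
        rw [hunif 0, ← hunifV, hgm', ← Measure.map_congr hS_eq]
    _ = P.map (fun ω => 1 + V ω * S ω) := by
        rw [← (indepFun_iff_map_prod_eq_prod_map_map hmeasV.aemeasurable hSae).mp hVindep,
          AEMeasurable.map_map_of_aemeasurable hφ.aemeasurable (hmeasV.aemeasurable.prodMk hSae)]
        rfl
end

section
/- Let φ: [0,∞) → (0,∞) be continuously differentiable with φ(0) = 1 and satisfy t e^t φ(t) = ∫_0^t φ(v) dv for all t ≥ 0. Then for all x > 0, log φ(x) = (e^{−x} − 1) log x + ∫_0^x e^{−u} log u du − x, and consequently lim_{x→∞} x e^x φ(x) = e^{−γ}, where γ is the Euler–Mascheroni constant. -/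
open MeasureTheory Set Filter Topology Asymptotics

lemma mellinKey :
    MellinConvergent (fun t => Real.log t • ((Real.exp (-t) : ℝ) : ℂ)) 1 ∧
      HasDerivAt (mellin fun t => ((Real.exp (-t) : ℝ) : ℂ))
        (mellin (fun t => Real.log t • ((Real.exp (-t) : ℝ) : ℂ)) 1) 1 := by
  refine mellin_hasDerivAt_of_isBigO_rpow (a := 2) (b := 0) ?_ ?_ (by norm_num) ?_ (by norm_num)
  · refine (Continuous.continuousOn ?_).locallyIntegrableOn measurableSet_Ioi
    exact Complex.continuous_ofReal.comp (Real.continuous_exp.comp continuous_neg)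
  · rw [← isBigO_norm_left]
    simp_rw [Complex.norm_real, isBigO_norm_left]
    simpa only [neg_one_mul] using (isLittleO_exp_neg_mul_rpow_atTop zero_lt_one _).isBigO
  · simp_rw [neg_zero, Real.rpow_zero]
    refine isBigO_const_of_tendsto (?_ : Tendsto _ _ (𝓝 (1 : ℂ))) one_ne_zero
    rw [(by simp : (1 : ℂ) = Real.exp (-0))]
    exact (Complex.continuous_ofReal.comp
      (Real.continuous_exp.comp continuous_neg)).continuousWithinAt

lemma integrableKey :
    IntegrableOn (fun t : ℝ => Real.exp (-t) * Real.log t) (Set.Ioi 0) := by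
  have h := mellinKey.1
  rw [MellinConvergent] at h
  simp only [sub_self, Complex.cpow_zero, one_smul, Complex.real_smul] at h
  have : IntegrableOn (fun t : ℝ => ((Real.exp (-t) * Real.log t : ℝ) : ℂ)) (Set.Ioi 0) := by
    refine h.congr_fun (fun t _ => ?_) measurableSet_Ioi
    push_cast; ring
  simpa [IntegrableOn, ← Complex.ofReal_neg, Complex.exp_ofReal_re] using this.re

lemma integralKey :
    (∫ t in Set.Ioi (0:ℝ), Real.exp (-t) * Real.log t) = -Real.eulerMascheroniConstant := by
  have hD : HasDerivAt Complex.GammaIntegral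
      (∫ t : ℝ in Ioi 0, (t : ℂ) ^ ((1:ℂ) - 1) * (Real.log t * Real.exp (-t))) 1 :=
    Complex.hasDerivAt_GammaIntegral (by norm_num)
  have heq : Complex.Gamma =ᶠ[𝓝 (1:ℂ)] Complex.GammaIntegral := by
    have hopen : IsOpen {s : ℂ | 0 < s.re} := isOpen_lt continuous_const Complex.continuous_re
    filter_upwards [hopen.mem_nhds (by norm_num : (0:ℝ) < (1:ℂ).re)] with s hs
    exact Complex.Gamma_eq_integral hs
  have hG : HasDerivAt Complex.Gamma
      (∫ t : ℝ in Ioi 0, (t : ℂ) ^ ((1:ℂ) - 1) * (Real.log t * Real.exp (-t))) 1 :=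
    HasDerivAt.congr_of_eventuallyEq hD heq
  have huniq := hG.unique Complex.hasDerivAt_Gamma_one
  have hsimp : (∫ t : ℝ in Ioi 0, (t : ℂ) ^ ((1:ℂ) - 1) * (Real.log t * Real.exp (-t)))
      = ((∫ t in Set.Ioi (0:ℝ), Real.exp (-t) * Real.log t : ℝ) : ℂ) := by
    rw [setIntegral_congr_fun measurableSet_Ioi
      (g := fun t : ℝ => ((Real.exp (-t) * Real.log t : ℝ) : ℂ)) (fun t ht => by
        simp only [sub_self, Complex.cpow_zero, one_mul]
        push_cast; ring)]
    exact integral_ofReal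
  rw [hsimp] at huniq
  exact_mod_cast huniq

theorem stmt10 (φ : ℝ → ℝ)
    (hsmooth : ContDiffOn ℝ 1 φ (Set.Ici (0:ℝ)))
    (hpos : ∀ t, 0 ≤ t → 0 < φ t)
    (h0 : φ 0 = 1)
    (hfe : ∀ t, 0 ≤ t → t * Real.exp t * φ t = ∫ v in (0:ℝ)..t, φ v) :
    (∀ x > (0:ℝ), Real.log (φ x)
        = (Real.exp (-x) - 1) * Real.log x
          + (∫ u in (0:ℝ)..x, Real.exp (-u) * Real.log u) - x) ∧
    Filter.Tendsto (fun x => x * Real.exp x * φ x) Filter.atTop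
      (nhds (Real.exp (-Real.eulerMascheroniConstant))) := by
  set f : ℝ → ℝ := fun u => Real.exp (-u) * Real.log u with hf
  have hfc : ContinuousOn f (Set.Ioi 0) := by
    refine ContinuousOn.mul ?_ ?_
    · exact (Real.continuous_exp.comp continuous_neg).continuousOn
    · exact fun t ht => (Real.continuousAt_log (ne_of_gt ht)).continuousWithinAt
  have hfint : ∀ x : ℝ, 0 ≤ x → IntervalIntegrable f volume 0 x := by
    intro x hx
    rw [intervalIntegrable_iff_integrableOn_Ioc_of_le hx]
    exact integrableKey.mono_set Set.Ioc_subset_Ioi_self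
  set P : ℝ → ℝ := fun x => ∫ u in (0:ℝ)..x, f u with hP
  set g : ℝ → ℝ := fun x =>
    Real.log (φ x) - ((Real.exp (-x) - 1) * Real.log x + P x - x) with hg
  -- the ODE
  have hODE : ∀ x : ℝ, 0 < x → deriv φ x = ((Real.exp (-x) - 1) / x - 1) * φ x := by
    intro x hx
    have hmem : Set.Ici (0:ℝ) ∈ 𝓝 x := Ici_mem_nhds hx
    have hφx : ContDiffAt ℝ 1 φ x := hsmooth.contDiffAt hmem
    have hφd : HasDerivAt φ (deriv φ x) x := (hφx.differentiableAt one_ne_zero).hasDerivAt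
    have hφc : ContinuousOn φ (Set.Ioi 0) :=
      (hsmooth.continuousOn).mono Set.Ioi_subset_Ici_self
    have hint : IntervalIntegrable φ volume 0 x := by
      apply ContinuousOn.intervalIntegrable
      refine (hsmooth.continuousOn).mono ?_
      rw [Set.uIcc_of_le hx.le]
      exact fun t ht => ht.1
    have hR : HasDerivAt (fun u => ∫ v in (0:ℝ)..u, φ v) (φ x) x :=
      intervalIntegral.integral_hasDerivAt_right hint
        (hφc.stronglyMeasurableAtFilter isOpen_Ioi x hx) (hφx.continuousAt)
    have hL : HasDerivAt (fun t => t * Real.exp t * φ t)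
        ((1 * Real.exp x + x * Real.exp x) * φ x + x * Real.exp x * deriv φ x) x :=
      ((hasDerivAt_id x).mul (Real.hasDerivAt_exp x)).mul hφd
    have heq : (fun t => t * Real.exp t * φ t) =ᶠ[𝓝 x] fun u => ∫ v in (0:ℝ)..u, φ v := by
      filter_upwards [hmem] with t ht using hfe t ht
    have key := hL.unique (hR.congr_of_eventuallyEq heq)
    have hex : Real.exp x ≠ 0 := (Real.exp_pos x).ne'
    have hxne : x ≠ 0 := hx.ne'
    field_simp [Real.exp_neg] at key ⊢
    have h1 : Real.exp x * Real.exp (-x) = 1 := by rw [← Real.exp_add]; simp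
    linear_combination Real.exp (-x) * key - ((1 + x) * φ x + x * deriv φ x) * h1
  -- g has zero derivative on (0, ∞)
  have hgderiv : ∀ x : ℝ, 0 < x → HasDerivAt g 0 x := by
    intro x hx
    have hxne : x ≠ 0 := hx.ne'
    have hmem : Set.Ici (0:ℝ) ∈ 𝓝 x := Ici_mem_nhds hx
    have hφx : ContDiffAt ℝ 1 φ x := hsmooth.contDiffAt hmem
    have hφd : HasDerivAt φ (deriv φ x) x := (hφx.differentiableAt one_ne_zero).hasDerivAt
    have h1 : HasDerivAt (fun t => Real.log (φ t)) (deriv φ x / φ x) x :=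
      hφd.log (hpos x hx.le).ne'
    have h2 : HasDerivAt (fun t : ℝ => Real.exp (-t) - 1) (Real.exp (-x) * (-1)) x := by
      have : HasDerivAt (fun t : ℝ => Real.exp (-t)) (Real.exp (-x) * (-1)) x :=
        (Real.hasDerivAt_exp (-x)).comp x ((hasDerivAt_id x).neg)
      simpa using this.sub_const 1
    have h3 : HasDerivAt Real.log (1 / x) x := by
      simpa [one_div] using Real.hasDerivAt_log hxne
    have h23 : HasDerivAt (fun t : ℝ => (Real.exp (-t) - 1) * Real.log t)
        (Real.exp (-x) * (-1) * Real.log x + (Real.exp (-x) - 1) * (1 / x)) x := h2.mul h3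
    have h4 : HasDerivAt P (f x) x :=
      intervalIntegral.integral_hasDerivAt_right (hfint x hx.le)
        (hfc.stronglyMeasurableAtFilter isOpen_Ioi x hx)
        (hfc.continuousAt (isOpen_Ioi.mem_nhds hx))
    have h5 : HasDerivAt (fun t : ℝ => t) 1 x := hasDerivAt_id x
    have hcomb : HasDerivAt g
        (deriv φ x / φ x - ((Real.exp (-x) * (-1) * Real.log x
          + (Real.exp (-x) - 1) * (1 / x)) + f x - 1)) x :=
      h1.sub ((h23.add h4).sub h5)
    convert hcomb using 1
    rw [hODE x hx]
    have hφne : φ x ≠ 0 := (hpos x hx.le).ne'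
    field_simp [hf]
    ring
  -- g is constant on (0, ∞)
  have hgconst : ∀ x : ℝ, 0 < x → g x = g 1 := by
    have key : ∀ a b : ℝ, 0 < a → a ≤ b → g b = g a := by
      intro a b ha hab
      have := constant_of_has_deriv_right_zero
        (f := g) (a := a) (b := b)
        (fun y hy => ((hgderiv y (ha.trans_le hy.1)).continuousAt).continuousWithinAt)
        (fun y hy => ((hgderiv y (ha.trans_le hy.1)).hasDerivWithinAt))
      exact this b ⟨hab, le_rfl⟩
    intro x hx
    rcases le_total x 1 with h | h
    · exact (key x 1 hx h).symm
    · exact key 1 x one_pos h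
  -- g tends to 0 at 0⁺
  have hgzero : Tendsto g (𝓝[>] (0:ℝ)) (𝓝 0) := by
    have t1 : Tendsto (fun x => Real.log (φ x)) (𝓝[>] (0:ℝ)) (𝓝 0) := by
      have hφ0 : Tendsto φ (𝓝[>] (0:ℝ)) (𝓝 1) := by
        have := (hsmooth.continuousOn 0 Set.self_mem_Ici).tendsto
        rw [h0] at this
        exact this.mono_left (nhdsWithin_mono _ Set.Ioi_subset_Ici_self)
      have := (Real.continuousAt_log one_ne_zero).tendsto.comp hφ0
      simpa [Function.comp_def] using this
    have t2 : Tendsto (fun x => (Real.exp (-x) - 1) * Real.log x) (𝓝[>] (0:ℝ)) (𝓝 0) := by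
      have ha : Tendsto (fun x : ℝ => (Real.exp (-x) - 1) / x) (𝓝[>] (0:ℝ)) (𝓝 (-1)) := by
        have hd : HasDerivAt (fun t : ℝ => Real.exp (-t)) (-1) 0 := by
          simpa [Function.comp_def] using (Real.hasDerivAt_exp (-0)).comp 0 ((hasDerivAt_id (0:ℝ)).neg)
        have := hasDerivAt_iff_tendsto_slope.mp hd
        have h' := this.mono_left (nhdsWithin_mono _ (fun y hy => ne_of_gt hy))
        refine h'.congr (fun y => ?_)
        simp [slope_def_field]
      have hb : Tendsto (fun x : ℝ => x * Real.log x) (𝓝[>] (0:ℝ)) (𝓝 0) := by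
        have := Real.continuous_mul_log.tendsto 0
        simpa using this.mono_left nhdsWithin_le_nhds
      have := ha.mul hb
      rw [neg_one_mul, neg_zero] at this
      refine this.congr' ?_
      filter_upwards [self_mem_nhdsWithin] with y hy
      have : (y:ℝ) ≠ 0 := ne_of_gt hy
      field_simp
    have t3 : Tendsto P (𝓝[>] (0:ℝ)) (𝓝 0) := by
      have hcw : ContinuousWithinAt P (Set.Icc 0 1) 0 := by
        apply intervalIntegral.continuousWithinAt_primitive (by simp)
        rw [min_self]
        exact hfint (max 0 1) (le_max_left _ _)
      have hP0 : P 0 = 0 := by simp [hP]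
      have := hcw.tendsto
      rw [hP0] at this
      have hsub : 𝓝[>] (0:ℝ) = 𝓝[Set.Ioc 0 1] (0:ℝ) :=
        (nhdsWithin_Ioc_eq_nhdsGT one_pos).symm
      rw [hsub]
      exact this.mono_left (nhdsWithin_mono _ Set.Ioc_subset_Icc_self)
    have t4 : Tendsto (fun x : ℝ => x) (𝓝[>] (0:ℝ)) (𝓝 0) :=
      tendsto_id.mono_left nhdsWithin_le_nhds
    have := t1.sub ((t2.add t3).sub t4)
    simpa using this
  -- conclude g 1 = 0
  have hg1 : g 1 = 0 := by
    have hconst : Tendsto g (𝓝[>] (0:ℝ)) (𝓝 (g 1)) := by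
      refine Tendsto.congr' ?_ tendsto_const_nhds
      filter_upwards [self_mem_nhdsWithin] with y hy
      exact (hgconst y hy).symm
    exact tendsto_nhds_unique hconst hgzero
  have hmain : ∀ x > (0:ℝ), Real.log (φ x)
      = (Real.exp (-x) - 1) * Real.log x + P x - x := by
    intro x hx
    have := hgconst x hx
    rw [hg1] at this
    have : g x = 0 := this
    simp only [hg] at this
    linarith [this]
  refine ⟨hmain, ?_⟩
  -- the limit
  have hrepr : ∀ x > (0:ℝ), x * Real.exp x * φ x
      = Real.exp (Real.exp (-x) * Real.log x + P x) := by
    intro x hx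
    have hφx : φ x = Real.exp (Real.log (φ x)) := (Real.exp_log (hpos x hx.le)).symm
    have hx' : x = Real.exp (Real.log x) := (Real.exp_log hx).symm
    calc x * Real.exp x * φ x
        = Real.exp (Real.log x) * Real.exp x * Real.exp (Real.log (φ x)) := by
          rw [← hφx, ← hx']
      _ = Real.exp (Real.log x + x + Real.log (φ x)) := by
          rw [← Real.exp_add, ← Real.exp_add]
      _ = Real.exp (Real.exp (-x) * Real.log x + P x) := by
          rw [hmain x hx]; ring_nf
  have e1 : Tendsto (fun x : ℝ => Real.exp (-x) * Real.log x) atTop (𝓝 0) := by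
    have hup : ∀ᶠ x : ℝ in atTop, Real.exp (-x) * Real.log x ≤ x * Real.exp (-x) := by
      filter_upwards [eventually_ge_atTop (1:ℝ)] with x hx
      have := Real.log_le_sub_one_of_pos (by linarith : (0:ℝ) < x)
      have hlog : Real.log x ≤ x := by linarith
      have := mul_le_mul_of_nonneg_left hlog (Real.exp_pos (-x)).le
      linarith [this]
    have hlo : ∀ᶠ x : ℝ in atTop, 0 ≤ Real.exp (-x) * Real.log x := by
      filter_upwards [eventually_ge_atTop (1:ℝ)] with x hx
      exact mul_nonneg (Real.exp_pos _).le (Real.log_nonneg hx)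
    have hxen : Tendsto (fun x : ℝ => x * Real.exp (-x)) atTop (𝓝 0) := by
      simpa using Real.tendsto_pow_mul_exp_neg_atTop_nhds_zero 1
    exact squeeze_zero' hlo hup hxen
  have e2 : Tendsto P atTop (𝓝 (-Real.eulerMascheroniConstant)) := by
    have := MeasureTheory.intervalIntegral_tendsto_integral_Ioi 0 integrableKey tendsto_id
    rwa [integralKey] at this
  have := (e1.add e2).congr' (f₂ := fun x => Real.exp (-x) * Real.log x + P x) (by rfl)
  have hexp := (Real.continuous_exp.tendsto _).comp this
  rw [zero_add] at hexp
  refine Tendsto.congr' ?_ hexp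
  filter_upwards [eventually_gt_atTop (0:ℝ)] with x hx
  exact (hrepr x hx).symm
end

section
/- For all k ≥ 2 and T with k ≥ T ≥ 15 log k, the sum A_k := ∑_{i=0}^k (2^i/i!) ∫_0^∞ u^i e^{−u} 2^{−(k−i)e^{−u}} du satisfies A_k = 2^{k+1} − (log 2/4)·k² + O(k·T). -/
open MeasureTheory
open scoped BigOperators

open Real Set

-- exact Gamma-type integral
lemma ig (n : ℕ) {b : ℝ} (hb : 0 < b) :
    ∫ t in Ioi (0:ℝ), t ^ n * Real.exp (-(b * t)) = n.factorial / b ^ (n+1) := by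
  have h := Real.integral_rpow_mul_exp_neg_mul_Ioi (a := (n:ℝ)+1) (r := b)
    (by positivity) hb
  have h2 : ∫ t in Ioi (0:ℝ), t ^ ((n:ℝ)+1-1) * Real.exp (-(b*t))
      = ∫ t in Ioi (0:ℝ), t ^ n * Real.exp (-(b*t)) := by
    refine setIntegral_congr_fun measurableSet_Ioi (fun t ht => ?_)
    rw [show (n:ℝ)+1-1 = (n:ℝ) by ring, Real.rpow_natCast]
  rw [h2] at h
  rw [h]
  rw [show (n:ℝ)+1 = ((n+1 : ℕ):ℝ) by push_cast; ring, Real.rpow_natCast,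
    Nat.cast_add, Nat.cast_one, Real.Gamma_nat_eq_factorial]
  rw [div_pow, one_pow]
  ring

-- integrability
lemma igb (n : ℕ) {b : ℝ} (hb : 0 < b) :
    IntegrableOn (fun t : ℝ => t ^ n * Real.exp (-(b * t))) (Ioi 0) := by
  apply integrable_of_isBigO_exp_neg (b := b/2) (by positivity)
  · exact Continuous.continuousOn (by fun_prop)
  · have h1 : (fun t : ℝ => t ^ n) =O[Filter.atTop] fun t => Real.exp ((b/2) * t) :=
      (isLittleO_pow_exp_pos_mul_atTop n (by positivity)).isBigO
    have h2 : (fun t : ℝ => Real.exp (-(b * t))) =O[Filter.atTop]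
        fun t => Real.exp (-(b * t)) := Asymptotics.isBigO_refl _ _
    have := h1.mul h2
    refine this.trans (Asymptotics.isBigO_of_le _ fun t => ?_)
    rw [← Real.exp_add]
    simp only [Real.norm_eq_abs, Real.abs_exp]
    apply le_of_eq
    congr 1
    ring

lemma expq {y : ℝ} (hy : 0 ≤ y) :
    0 ≤ Real.exp (-y) - 1 + y ∧ Real.exp (-y) - 1 + y ≤ y ∧
      Real.exp (-y) - 1 + y ≤ y ^ 2 := by
  have h0 : (-y) + 1 ≤ Real.exp (-y) := Real.add_one_le_exp (-y)
  have h1 : Real.exp (-y) ≤ 1 := Real.exp_le_one_iff.mpr (by linarith)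
  refine ⟨by linarith, by linarith, ?_⟩
  have h2 : y + 1 ≤ Real.exp y := by linarith [Real.add_one_le_exp y]
  have hp : (0:ℝ) < 1 + y := by linarith
  have h3 : Real.exp (-y) ≤ 1 / (1 + y) := by
    rw [Real.exp_neg, inv_eq_one_div]
    exact one_div_le_one_div_of_le hp (by linarith)
  have h4 : 1 / (1 + y) - 1 + y = y ^ 2 / (1 + y) := by field_simp; ring
  have h5 : y ^ 2 / (1 + y) ≤ y ^ 2 := div_le_self (sq_nonneg y) (by linarith)
  linarith

set_option maxHeartbeats 1000000 in
lemma per (i m : ℕ) : ∃ E : ℝ,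
    (∫ u in Ioi (0:ℝ), u ^ i * Real.exp (-u) * (2:ℝ) ^ (-(m:ℝ) * Real.exp (-u)))
      = i.factorial - Real.log 2 * m * i.factorial / 2 ^ (i+1) + E ∧
    0 ≤ E ∧ E ≤ Real.log 2 * m * i.factorial / 2 ^ (i+1) ∧
    E ≤ (Real.log 2) ^ 2 * m ^ 2 * i.factorial / 3 ^ (i+1) := by
  set c := Real.log 2 with hcdef
  have hc : 0 < c := Real.log_pos one_lt_two
  set R : ℝ → ℝ := fun u => Real.exp (-(c * m * Real.exp (-u))) - 1 + c * m * Real.exp (-u)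
    with hR
  have hy : ∀ u : ℝ, 0 ≤ c * m * Real.exp (-u) := fun u => by positivity
  have hR0 : ∀ u : ℝ, 0 ≤ R u := fun u => (expq (hy u)).1
  have hR1 : ∀ u : ℝ, R u ≤ c * m * Real.exp (-u) := fun u => (expq (hy u)).2.1
  have hR2 : ∀ u : ℝ, R u ≤ (c * m * Real.exp (-u)) ^ 2 := fun u => (expq (hy u)).2.2
  -- basic exp identities
  have he2 : ∀ u : ℝ, Real.exp (-(2*u)) = Real.exp (-u) * Real.exp (-u) := by
    intro u; rw [← Real.exp_add]; ring_nf
  have he3 : ∀ u : ℝ, Real.exp (-(3*u)) = Real.exp (-u) * (Real.exp (-u) * Real.exp (-u)) := by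
    intro u; rw [← Real.exp_add, ← Real.exp_add]; ring_nf
  -- integrability
  have I1 : IntegrableOn (fun u : ℝ => u ^ i * Real.exp (-u)) (Ioi 0) := by
    have := igb i (b := 1) one_pos
    simpa using this
  have I2 : IntegrableOn (fun u : ℝ => u ^ i * Real.exp (-(2*u))) (Ioi 0) :=
    igb i (b := 2) two_pos
  have I3 : IntegrableOn (fun u : ℝ => u ^ i * Real.exp (-(3*u))) (Ioi 0) :=
    igb i (b := 3) three_pos
  have hxc : Continuous fun u : ℝ => Real.exp (-u) := Real.continuous_exp.comp continuous_neg
  have Rcont : Continuous R :=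
    ((Real.continuous_exp.comp ((continuous_const.mul hxc).neg)).sub continuous_const).add
      (continuous_const.mul hxc)
  have IR : IntegrableOn (fun u : ℝ => u ^ i * Real.exp (-u) * R u) (Ioi 0) := by
    refine (I3.const_mul ((c*m)^2)).mono' ?_ ?_
    · exact (((continuous_pow i).mul hxc).mul Rcont).aestronglyMeasurable.restrict
    · filter_upwards [ae_restrict_mem measurableSet_Ioi] with u hu
      have hu0 : (0:ℝ) < u := hu
      have hfn : 0 ≤ u ^ i * Real.exp (-u) * R u :=
        mul_nonneg (by positivity) (hR0 u)
      rw [Real.norm_eq_abs, abs_of_nonneg hfn]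
      have : u ^ i * Real.exp (-u) * R u ≤ u ^ i * Real.exp (-u) * (c * m * Real.exp (-u)) ^ 2 :=
        mul_le_mul_of_nonneg_left (hR2 u) (by positivity)
      calc u ^ i * Real.exp (-u) * R u
          ≤ u ^ i * Real.exp (-u) * (c * m * Real.exp (-u)) ^ 2 := this
        _ = (c*m)^2 * (u ^ i * Real.exp (-(3*u))) := by rw [he3]; ring
  -- rewrite the target integrand
  have hsplit : ∀ u ∈ Ioi (0:ℝ),
      u ^ i * Real.exp (-u) * (2:ℝ) ^ (-(m:ℝ) * Real.exp (-u))
        = (u ^ i * Real.exp (-u) - c * m * (u ^ i * Real.exp (-(2*u))))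
          + u ^ i * Real.exp (-u) * R u := by
    intro u _
    rw [Real.rpow_def_of_pos two_pos, hR]
    have : Real.log 2 * (-(m:ℝ) * Real.exp (-u)) = -(c * m * Real.exp (-u)) := by
      rw [hcdef]; ring
    rw [this, he2]
    ring
  have hInt : (∫ u in Ioi (0:ℝ), u ^ i * Real.exp (-u) * (2:ℝ) ^ (-(m:ℝ) * Real.exp (-u)))
      = (∫ u in Ioi (0:ℝ), ((u ^ i * Real.exp (-u) - c * m * (u ^ i * Real.exp (-(2*u))))
          + u ^ i * Real.exp (-u) * R u)) :=
    setIntegral_congr_fun measurableSet_Ioi hsplit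
  have hadd : (∫ u in Ioi (0:ℝ), ((u ^ i * Real.exp (-u) - c * m * (u ^ i * Real.exp (-(2*u))))
          + u ^ i * Real.exp (-u) * R u))
      = ((∫ u in Ioi (0:ℝ), u ^ i * Real.exp (-u))
          - c * m * (∫ u in Ioi (0:ℝ), u ^ i * Real.exp (-(2*u))))
        + ∫ u in Ioi (0:ℝ), u ^ i * Real.exp (-u) * R u := by
    have hsub : Integrable (fun u : ℝ => u ^ i * Real.exp (-u)
        - c * m * (u ^ i * Real.exp (-(2*u)))) (volume.restrict (Ioi 0)) :=
      I1.sub (I2.const_mul (c*m))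
    rw [integral_add hsub IR]
    congr 1
    rw [integral_sub I1 (I2.const_mul (c*m)), MeasureTheory.integral_const_mul]
  have hv1 : (∫ u in Ioi (0:ℝ), u ^ i * Real.exp (-u)) = i.factorial := by
    have := ig i (b := 1) one_pos
    simpa using this
  have hv2 : (∫ u in Ioi (0:ℝ), u ^ i * Real.exp (-(2*u))) = i.factorial / 2 ^ (i+1) :=
    ig i (b := 2) two_pos
  refine ⟨∫ u in Ioi (0:ℝ), u ^ i * Real.exp (-u) * R u, ?_, ?_, ?_, ?_⟩
  · rw [hInt, hadd, hv1, hv2]; ring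
  · apply setIntegral_nonneg measurableSet_Ioi
    intro u hu
    have hu0 : (0:ℝ) < u := hu
    exact mul_nonneg (by positivity) (hR0 u)
  · calc (∫ u in Ioi (0:ℝ), u ^ i * Real.exp (-u) * R u)
        ≤ ∫ u in Ioi (0:ℝ), c * m * (u ^ i * Real.exp (-(2*u))) := by
          apply setIntegral_mono_on IR (I2.const_mul (c*m)) measurableSet_Ioi
          intro u hu
          have hu0 : (0:ℝ) < u := hu
          calc u ^ i * Real.exp (-u) * R u
              ≤ u ^ i * Real.exp (-u) * (c * m * Real.exp (-u)) :=
                mul_le_mul_of_nonneg_left (hR1 u) (by positivity)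
            _ = c * m * (u ^ i * Real.exp (-(2*u))) := by rw [he2]; ring
      _ = c * m * i.factorial / 2 ^ (i+1) := by
          rw [MeasureTheory.integral_const_mul, hv2]; ring
  · calc (∫ u in Ioi (0:ℝ), u ^ i * Real.exp (-u) * R u)
        ≤ ∫ u in Ioi (0:ℝ), (c*m)^2 * (u ^ i * Real.exp (-(3*u))) := by
          apply setIntegral_mono_on IR (I3.const_mul ((c*m)^2)) measurableSet_Ioi
          intro u hu
          have hu0 : (0:ℝ) < u := hu
          calc u ^ i * Real.exp (-u) * R u
              ≤ u ^ i * Real.exp (-u) * (c * m * Real.exp (-u))^2 :=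
                mul_le_mul_of_nonneg_left (hR2 u) (by positivity)
            _ = (c*m)^2 * (u ^ i * Real.exp (-(3*u))) := by rw [he3]; ring
      _ = c ^ 2 * m ^ 2 * i.factorial / 3 ^ (i+1) := by
          rw [MeasureTheory.integral_const_mul, ig i (b := 3) three_pos]; ring

lemma geom23 (n : ℕ) : (∑ i ∈ Finset.range n, ((2:ℝ)/3) ^ i) ≤ 3 := by
  have h := geom_sum_eq (by norm_num : ((2:ℝ)/3) ≠ 1) n
  rw [h]
  have hp : (0:ℝ) ≤ ((2:ℝ)/3) ^ n := by positivity
  have : ((2:ℝ)/3) ^ n ≤ 1 := pow_le_one₀ (by norm_num) (by norm_num)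
  rw [div_le_iff_of_neg (by norm_num : ((2:ℝ)/3) - 1 < 0)]
  linarith

lemma tailsum (n L : ℕ) : (∑ i ∈ Finset.range n, ((2:ℝ)/3) ^ (i - L)) ≤ L + 3 := by
  by_cases h : n ≤ L
  · calc (∑ i ∈ Finset.range n, ((2:ℝ)/3) ^ (i - L))
        ≤ ∑ _i ∈ Finset.range n, (1:ℝ) := by
          apply Finset.sum_le_sum
          intro i _
          exact pow_le_one₀ (by norm_num) (by norm_num)
      _ = n := by simp
      _ ≤ L + 3 := by
          have : (n:ℝ) ≤ L := by exact_mod_cast h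
          linarith
  · push_neg at h
    rw [Finset.range_eq_Ico, ← Finset.sum_Ico_consecutive _ (Nat.zero_le L) h.le]
    have h1 : (∑ i ∈ Finset.Ico 0 L, ((2:ℝ)/3) ^ (i - L)) = L := by
      have hc : ∀ i ∈ Finset.Ico 0 L, ((2:ℝ)/3) ^ (i - L) = 1 := by
        intro i hi
        rw [Nat.sub_eq_zero_of_le (le_of_lt (Finset.mem_Ico.mp hi).2), pow_zero]
      rw [Finset.sum_congr rfl hc]
      simp
    have h2 : (∑ i ∈ Finset.Ico L n, ((2:ℝ)/3) ^ (i - L)) ≤ 3 := by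
      rw [Finset.sum_Ico_eq_sum_range]
      calc (∑ i ∈ Finset.range (n - L), ((2:ℝ)/3) ^ (L + i - L))
          = ∑ i ∈ Finset.range (n - L), ((2:ℝ)/3) ^ i := by
            refine Finset.sum_congr rfl (fun i _ => ?_)
            congr 1
            omega
        _ ≤ 3 := geom23 _
    rw [h1]
    linarith

lemma clog_le (k : ℕ) (hk : 2 ≤ k) :
    (Nat.clog 2 k : ℝ) ≤ Real.log k / Real.log 2 + 1 := by
  set m := Nat.clog 2 k with hm
  rcases Nat.eq_zero_or_pos m with h0 | h0
  · rw [h0]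
    simp only [Nat.cast_zero]
    have : 0 ≤ Real.log k / Real.log 2 :=
      div_nonneg (Real.log_nonneg (by exact_mod_cast hk.trans' (by norm_num)))
        (Real.log_nonneg one_le_two)
    linarith
  · have hlt : 2 ^ (m - 1) < k := Nat.pow_pred_clog_lt_self one_lt_two (by omega)
    have hlt' : ((2:ℝ)) ^ (m - 1) < (k:ℝ) := by exact_mod_cast hlt
    have hlog : ((m:ℝ) - 1) * Real.log 2 < Real.log k := by
      have := Real.log_lt_log (by positivity) hlt'
      rwa [Real.log_pow, Nat.cast_sub h0, Nat.cast_one] at this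
    have h2 : (0:ℝ) < Real.log 2 := Real.log_pos one_lt_two
    have h3 : (m:ℝ) - 1 < Real.log k / Real.log 2 := by
      rw [lt_div_iff₀ h2]; linarith
    linarith

lemma gauss (k : ℕ) :
    (∑ i ∈ Finset.range (k+1), (((k - i : ℕ)):ℝ)) = k * (k+1) / 2 := by
  have h1 : (∑ j ∈ Finset.range (k+1), ((k + 1 - 1 - j : ℕ):ℝ))
      = ∑ j ∈ Finset.range (k+1), (j:ℝ) :=
    Finset.sum_range_reflect (fun i => (i:ℝ)) (k+1)
  have h1' : (∑ j ∈ Finset.range (k+1), ((k - j : ℕ):ℝ))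
      = ∑ j ∈ Finset.range (k+1), (j:ℝ) := by
    rw [← h1]
    exact Finset.sum_congr rfl (fun j _ => by norm_num)
  rw [h1']
  have h2 : ((∑ i ∈ Finset.range (k+1), i : ℕ):ℝ) = ∑ j ∈ Finset.range (k+1), (j:ℝ) := by
    push_cast
    rfl
  have h3 := Finset.sum_range_id_mul_two (k+1)
  have h4 : ((∑ i ∈ Finset.range (k+1), i : ℕ):ℝ) * 2 = (((k+1) * (k+1-1) : ℕ):ℝ) := by
    exact_mod_cast congrArg (Nat.cast : ℕ → ℝ) h3
  have h5 : (((k+1) * (k+1-1) : ℕ):ℝ) = (k+1) * k := by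
    have : k + 1 - 1 = k := rfl
    rw [this]
    push_cast
    ring
  rw [← h2]
  linarith

open scoped BigOperators

theorem stmt17 :
    ∃ C : ℝ, 0 < C ∧ ∀ k : ℕ, 2 ≤ k → ∀ T : ℝ,
      15 * Real.log k ≤ T → T ≤ k →
      |(∑ i ∈ Finset.range (k + 1), (2:ℝ) ^ i / (Nat.factorial i) *
          ∫ u in Set.Ioi (0:ℝ),
            u ^ i * Real.exp (-u) * (2:ℝ) ^ (-(((k - i : ℕ)) : ℝ) * Real.exp (-u)))
        - ((2:ℝ) ^ (k + 1) - (Real.log 2 / 4) * k ^ 2)| ≤ C * k * T := by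
  refine ⟨2, by norm_num, ?_⟩
  intro k hk T hT1 hT2
  have hk2 : (2:ℝ) ≤ (k:ℝ) := by exact_mod_cast hk
  have hlog2l : (0.6931471803:ℝ) < Real.log 2 := Real.log_two_gt_d9
  have hlog2u : Real.log 2 < 0.6931471808 := Real.log_two_lt_d9
  have hlogk2 : Real.log 2 ≤ Real.log k := Real.log_le_log (by norm_num) hk2
  have hlogk0 : 0 ≤ Real.log k := by linarith
  have hT10 : (10:ℝ) ≤ T := by nlinarith
  set c := Real.log 2 with hc
  have hc0 : 0 < c := Real.log_pos one_lt_two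
  have hc1 : c ≤ 1 := by linarith
  set L := 2 * Nat.clog 2 k with hLdef
  -- bound k * (2/3)^L ≤ 1
  have hpowL : (k:ℝ) * ((2:ℝ)/3) ^ L ≤ 1 := by
    have h1 : ((2:ℝ)/3) ^ L = ((4:ℝ)/9) ^ (Nat.clog 2 k) := by
      rw [hLdef, pow_mul]; norm_num
    have h2 : ((4:ℝ)/9) ^ (Nat.clog 2 k) ≤ ((1:ℝ)/2) ^ (Nat.clog 2 k) :=
      pow_le_pow_left₀ (by norm_num) (by norm_num) _
    have h3 : (k:ℝ) ≤ (2:ℝ) ^ (Nat.clog 2 k) := by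
      exact_mod_cast Nat.le_pow_clog one_lt_two k
    have h4 : ((1:ℝ)/2) ^ (Nat.clog 2 k) * (2:ℝ) ^ (Nat.clog 2 k) = 1 := by
      rw [← mul_pow]; norm_num
    calc (k:ℝ) * ((2:ℝ)/3) ^ L ≤ (2:ℝ) ^ (Nat.clog 2 k) * ((1:ℝ)/2) ^ (Nat.clog 2 k) := by
          rw [h1]
          exact mul_le_mul h3 h2 (by positivity) (by positivity)
      _ = 1 := by rw [mul_comm]; exact h4
  have hLT : (L:ℝ) + 3 ≤ T := by
    have hclog : (Nat.clog 2 k : ℝ) ≤ Real.log k / Real.log 2 + 1 := clog_le k hk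
    have hdiv : Real.log k / Real.log 2 ≤ (3/2) * Real.log k := by
      rw [div_le_iff₀ hc0]
      nlinarith
    have hLcast : (L:ℝ) = 2 * (Nat.clog 2 k : ℝ) := by
      rw [hLdef]; push_cast; ring
    have hlogk15 : Real.log k ≤ T / 15 := by linarith
    nlinarith
  have hck0 : 0 ≤ (c/4) * (k:ℝ) := by positivity
  have hck1 : (c/4) * (k:ℝ) ≤ (k:ℝ) := by nlinarith
  have hkT : (20:ℝ) ≤ (k:ℝ) * T := by nlinarith
  have hkkT : (k:ℝ) ≤ (k:ℝ) * T / 10 := by nlinarith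
  -- per-index decomposition
  have key : ∀ i : ℕ, ∃ E : ℝ,
      (2:ℝ) ^ i / (Nat.factorial i) * (∫ u in Set.Ioi (0:ℝ),
          u ^ i * Real.exp (-u) * (2:ℝ) ^ (-(((k - i : ℕ)) : ℝ) * Real.exp (-u)))
        = (2:ℝ) ^ i - c * ((k - i : ℕ):ℝ) / 2 + E ∧
      0 ≤ E ∧ E ≤ (k:ℝ) * ((2:ℝ)/3) ^ (i - L) := by
    intro i
    obtain ⟨E, hEeq, hE0, hElin, hEquad⟩ := per i (k - i)
    have hfac : ((Nat.factorial i : ℝ)) ≠ 0 := by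
      exact_mod_cast (Nat.factorial_pos i).ne'
    have hfac0 : (0:ℝ) < (Nat.factorial i : ℝ) := by positivity
    have hmk : ((k - i : ℕ):ℝ) ≤ (k:ℝ) := by exact_mod_cast Nat.sub_le k i
    have hmk0 : (0:ℝ) ≤ ((k - i : ℕ):ℝ) := Nat.cast_nonneg _
    refine ⟨(2:ℝ) ^ i / (Nat.factorial i) * E, ?_, by positivity, ?_⟩
    · rw [hEeq]
      field_simp
      ring
    · by_cases hiL : i ≤ L
      · rw [Nat.sub_eq_zero_of_le hiL, pow_zero, mul_one]
        calc (2:ℝ) ^ i / (Nat.factorial i) * E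
            ≤ (2:ℝ) ^ i / (Nat.factorial i) * (c * (k - i : ℕ) * (Nat.factorial i) / 2 ^ (i+1)) :=
              mul_le_mul_of_nonneg_left hElin (by positivity)
          _ = c * ((k - i : ℕ):ℝ) / 2 := by
              rw [pow_succ]
              field_simp
          _ ≤ (k:ℝ) := by
              have h1 : c * ((k - i : ℕ):ℝ) ≤ 1 * (k:ℝ) :=
                mul_le_mul hc1 hmk hmk0 zero_le_one
              linarith only [h1]
      · calc (2:ℝ) ^ i / (Nat.factorial i) * E
            ≤ (2:ℝ) ^ i / (Nat.factorial i) *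
                (c ^ 2 * ((k - i : ℕ):ℝ) ^ 2 * (Nat.factorial i) / 3 ^ (i+1)) :=
              mul_le_mul_of_nonneg_left hEquad (by positivity)
          _ = c ^ 2 * ((k - i : ℕ):ℝ) ^ 2 * ((2:ℝ) ^ i / 3 ^ (i+1)) := by
              field_simp
          _ ≤ 1 * ((k:ℝ) ^ 2) * (((2:ℝ)/3) ^ i) := by
              have e1 : c ^ 2 ≤ 1 := pow_le_one₀ hc0.le hc1
              have e2 : ((k - i : ℕ):ℝ) ^ 2 ≤ (k:ℝ) ^ 2 := pow_le_pow_left₀ hmk0 hmk 2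
              have e3 : ((2:ℝ) ^ i / 3 ^ (i+1)) ≤ ((2:ℝ)/3) ^ i := by
                rw [div_pow]
                exact div_le_div₀ (by positivity) le_rfl (by positivity)
                  (pow_le_pow_right₀ (by norm_num) (Nat.le_succ i))
              have e4 : (0:ℝ) ≤ ((k - i : ℕ):ℝ) ^ 2 := by positivity
              have e5 : (0:ℝ) ≤ (2:ℝ) ^ i / 3 ^ (i+1) := by positivity
              have e6 : (0:ℝ) ≤ 1 * ((k:ℝ) ^ 2) := by positivity
              exact mul_le_mul (mul_le_mul e1 e2 e4 zero_le_one) e3 e5 e6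
          _ = (k:ℝ) ^ 2 * ((2:ℝ)/3) ^ i := by ring
          _ ≤ (k:ℝ) * ((2:ℝ)/3) ^ (i - L) := by
              have hiL' : L ≤ i := le_of_not_ge hiL
              have hsplitpow : ((2:ℝ)/3) ^ i = ((2:ℝ)/3) ^ L * ((2:ℝ)/3) ^ (i - L) := by
                rw [← pow_add]
                congr 1
                omega
              rw [hsplitpow]
              have h23 : (0:ℝ) ≤ ((2:ℝ)/3) ^ (i - L) := by positivity
              calc (k:ℝ) ^ 2 * (((2:ℝ)/3) ^ L * ((2:ℝ)/3) ^ (i - L))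
                  = ((k:ℝ) * ((2:ℝ)/3) ^ L) * ((k:ℝ) * ((2:ℝ)/3) ^ (i - L)) := by ring
                _ ≤ 1 * ((k:ℝ) * ((2:ℝ)/3) ^ (i - L)) := by
                    apply mul_le_mul_of_nonneg_right hpowL (by positivity)
                _ = (k:ℝ) * ((2:ℝ)/3) ^ (i - L) := by ring
  choose E hEeq hE0 hEb using key
  have hsplit : (∑ i ∈ Finset.range (k + 1), (2:ℝ) ^ i / (Nat.factorial i) *
          ∫ u in Set.Ioi (0:ℝ),
            u ^ i * Real.exp (-u) * (2:ℝ) ^ (-(((k - i : ℕ)) : ℝ) * Real.exp (-u)))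
      = (∑ i ∈ Finset.range (k + 1), ((2:ℝ) ^ i - c * ((k - i : ℕ):ℝ) / 2))
        + ∑ i ∈ Finset.range (k + 1), E i := by
    rw [← Finset.sum_add_distrib]
    exact Finset.sum_congr rfl (fun i _ => hEeq i)
  have hgeom : (∑ i ∈ Finset.range (k + 1), (2:ℝ) ^ i) = 2 ^ (k+1) - 1 := by
    rw [geom_sum_eq (by norm_num : (2:ℝ) ≠ 1)]
    norm_num
  have hmain : (∑ i ∈ Finset.range (k + 1), ((2:ℝ) ^ i - c * ((k - i : ℕ):ℝ) / 2))
      = (2 ^ (k+1) - 1) - (c/2) * ((k:ℝ) * (k+1) / 2) := by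
    rw [Finset.sum_sub_distrib, hgeom]
    congr 1
    rw [show (∑ i ∈ Finset.range (k + 1), c * ((k - i : ℕ):ℝ) / 2)
        = ∑ i ∈ Finset.range (k + 1), (c/2) * ((k - i : ℕ):ℝ) from
      Finset.sum_congr rfl (fun i _ => by ring), ← Finset.mul_sum, gauss]
  set S := ∑ i ∈ Finset.range (k + 1), E i with hS
  have hS0 : 0 ≤ S := Finset.sum_nonneg (fun i _ => hE0 i)
  have hSb : S ≤ (k:ℝ) * ((L:ℝ) + 3) := by
    calc S ≤ ∑ i ∈ Finset.range (k + 1), (k:ℝ) * ((2:ℝ)/3) ^ (i - L) :=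
          Finset.sum_le_sum (fun i _ => hEb i)
      _ = (k:ℝ) * ∑ i ∈ Finset.range (k + 1), ((2:ℝ)/3) ^ (i - L) := by
          rw [Finset.mul_sum]
      _ ≤ (k:ℝ) * ((L:ℝ) + 3) := by
          apply mul_le_mul_of_nonneg_left (tailsum (k+1) L) (by positivity)
  have hST : S ≤ (k:ℝ) * T := by
    calc S ≤ (k:ℝ) * ((L:ℝ) + 3) := hSb
      _ ≤ (k:ℝ) * T := mul_le_mul_of_nonneg_left hLT (by positivity)
  have heq : (∑ i ∈ Finset.range (k + 1), (2:ℝ) ^ i / (Nat.factorial i) *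
          ∫ u in Set.Ioi (0:ℝ),
            u ^ i * Real.exp (-u) * (2:ℝ) ^ (-(((k - i : ℕ)) : ℝ) * Real.exp (-u)))
        - ((2:ℝ) ^ (k + 1) - (c / 4) * (k:ℝ) ^ 2)
      = -1 - (c/4) * (k:ℝ) + S := by
    rw [hsplit, hmain]
    ring
  rw [heq]
  rw [abs_le]
  constructor
  · linarith only [hS0, hST, hck0, hck1, hkT, hkkT]
  · linarith only [hS0, hST, hck0, hck1, hkT, hkkT]
end
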